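/- If G is a planar well-totally-dominated graph with total domination number 2 and minimum degree at least 3, then G has at most 16 vertices. -/
import Mathlib


def IsTDS {V : Type*} (G : SimpleGraph V) (S : Set V) : Prop :=
  ∀ v : V, ∃ u ∈ S, G.Adj v u

def IsMinTDS {V : Type*} (G : SimpleGraph V) (S : Set V) : Prop :=
  IsTDS G S ∧ ∀ T ⊂ S, ¬ IsTDS G T

/-- H is a minor of G (via branch sets). -/
def HasMinor {V W : Type*} (G : SimpleGraph V) (H : SimpleGraph W) : Prop :=
  ∃ f : W → Set V,
    (∀ w, (f w).Nonempty) ∧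
    (∀ w, (G.induce (f w)).Connected) ∧
    (Pairwise fun a b => Disjoint (f a) (f b)) ∧
    ∀ a b : W, H.Adj a b → ∃ u ∈ f a, ∃ v ∈ f b, G.Adj u v

/-- Planarity via Wagner's theorem: no K₅ and no K₃,₃ minor. -/
def IsPlanar {V : Type*} (G : SimpleGraph V) : Prop :=
  ¬ HasMinor G (⊤ : SimpleGraph (Fin 5)) ∧
  ¬ HasMinor G (completeBipartiteGraph (Fin 3) (Fin 3))

/-- An edge whose endpoints form a total dominating set. -/
def DomEdge {V : Type*} (G : SimpleGraph V) (u v : V) : Prop :=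
  G.Adj u v ∧ IsTDS G {u, v}

/- ### Auxiliary lemmas -/

lemma my_singleton_connected {V : Type*} (G : SimpleGraph V) (x : V) :
    (G.induce {x}).Connected := by
  rw [SimpleGraph.connected_iff]
  refine ⟨?_, ⟨⟨x, rfl⟩⟩⟩
  intro a b
  have : a = b := by
    apply Subtype.ext
    have ha := a.2; have hb := b.2
    simp only [Set.mem_singleton_iff] at ha hb
    rw [ha, hb]
  rw [this]

lemma my_pair_connected {V : Type*} (G : SimpleGraph V) {c d : V} (h : G.Adj c d) :
    (G.induce {c, d}).Connected := by
  rw [SimpleGraph.connected_iff]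
  refine ⟨?_, ⟨⟨c, Or.inl rfl⟩⟩⟩
  have key : ∀ x : ({c, d} : Set V),
      (G.induce {c, d}).Reachable ⟨c, Or.inl rfl⟩ x := by
    rintro ⟨x, hx | hx⟩
    · subst hx; rfl
    · subst hx
      exact SimpleGraph.Adj.reachable (by simp [h])
  intro a b
  exact (key a).symm.trans (key b)

lemma exists_minTDS_subset {V : Type*} [Fintype V] (G : SimpleGraph V) :
    ∀ n (S : Set V), S.ncard ≤ n → IsTDS G S → ∃ T ⊆ S, IsMinTDS G T := by
  intro n
  induction n with
  | zero =>
    intro S hn hS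
    exact ⟨S, subset_rfl, hS, fun T hT => absurd (Set.ncard_lt_ncard hT (Set.toFinite S))
      (by omega)⟩
  | succ n ih =>
    intro S hn hS
    by_cases h : ∀ T ⊂ S, ¬ IsTDS G T
    · exact ⟨S, subset_rfl, hS, h⟩
    · push_neg at h
      obtain ⟨T, hTS, hT⟩ := h
      have hlt : T.ncard < S.ncard := Set.ncard_lt_ncard hTS (Set.toFinite S)
      obtain ⟨U, hUT, hU⟩ := ih T (by omega) hT
      exact ⟨U, hUT.trans hTS.subset, hU⟩

lemma my_dss {V : Type*} {x y : V} (h : x ≠ y) : Disjoint ({x} : Set V) {y} :=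
  Set.disjoint_singleton.mpr h

lemma my_dsp {V : Type*} {x c d : V} (h1 : x ≠ c) (h2 : x ≠ d) :
    Disjoint ({x} : Set V) {c, d} := by
  rw [Set.disjoint_singleton_left]
  simp [h1, h2]

lemma my_dps {V : Type*} {x c d : V} (h1 : c ≠ x) (h2 : d ≠ x) :
    Disjoint ({c, d} : Set V) {x} := (my_dsp h1.symm h2.symm).symm

/-- Key lemma: if G has no K₃,₃ minor and from every pair of vertices one can find a
dominating edge avoiding them, then any two distinct vertices have at most 4 common
neighbors. -/
lemma common_nbrs_le_four {V : Type*} [Fintype V] (G : SimpleGraph V)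
    (hK33 : ¬ HasMinor G (completeBipartiteGraph (Fin 3) (Fin 3)))
    (hdompair : ∀ p q : V, ∃ c d : V, c ≠ d ∧ G.Adj c d ∧ IsTDS G {c, d} ∧
      c ∉ ({p, q} : Set V) ∧ d ∉ ({p, q} : Set V))
    {p q : V} (hpq : p ≠ q) :
    (G.neighborSet p ∩ G.neighborSet q).ncard ≤ 4 := by
  obtain ⟨c, d, hcd, hadj, hdom, hcpq, hdpq⟩ := hdompair p q
  set C := (G.neighborSet p ∩ G.neighborSet q) \ {c, d} with hCdef
  have hCle : C.ncard ≤ 2 := by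
    by_contra hgt
    push_neg at hgt
    obtain ⟨t, hts, ht3⟩ := Set.exists_subset_card_eq (s := C)
      (show 3 ≤ C.ncard by omega)
    rw [Set.ncard_eq_three] at ht3
    obtain ⟨z₁, z₂, z₃, h12, h13, h23, rfl⟩ := ht3
    have hz : ∀ z ∈ ({z₁, z₂, z₃} : Set V),
        G.Adj p z ∧ G.Adj q z ∧ z ≠ c ∧ z ≠ d := by
      intro z hzmem
      have hm := hts hzmem
      rw [hCdef] at hm
      obtain ⟨⟨hp, hq⟩, hnot⟩ := hm
      simp only [Set.mem_insert_iff, Set.mem_singleton_iff, not_or] at hnot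
      exact ⟨hp, hq, hnot.1, hnot.2⟩
    obtain ⟨hp1, hq1, hc1, hd1⟩ := hz z₁ (by simp)
    obtain ⟨hp2, hq2, hc2, hd2⟩ := hz z₂ (by simp)
    obtain ⟨hp3, hq3, hc3, hd3⟩ := hz z₃ (by simp)
    have hcp : c ≠ p := fun h => hcpq (by simp [h])
    have hcq : c ≠ q := fun h => hcpq (by simp [h])
    have hdp : d ≠ p := fun h => hdpq (by simp [h])
    have hdq : d ≠ q := fun h => hdpq (by simp [h])
    have hz1p : z₁ ≠ p := fun h => G.irrefl (h ▸ hp1)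
    have hz2p : z₂ ≠ p := fun h => G.irrefl (h ▸ hp2)
    have hz3p : z₃ ≠ p := fun h => G.irrefl (h ▸ hp3)
    have hz1q : z₁ ≠ q := fun h => G.irrefl (h ▸ hq1)
    have hz2q : z₂ ≠ q := fun h => G.irrefl (h ▸ hq2)
    have hz3q : z₃ ≠ q := fun h => G.irrefl (h ▸ hq3)
    apply hK33
    refine ⟨Sum.elim ![{p}, {q}, {c, d}] ![{z₁}, {z₂}, {z₃}], ?_, ?_, ?_, ?_⟩
    · rintro (i | i) <;> fin_cases i <;> simp
    · rintro (i | i) <;> fin_cases i <;>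
        simp only [Sum.elim_inl, Sum.elim_inr, Matrix.cons_val_zero, Matrix.cons_val_one,
          Matrix.head_cons, Matrix.cons_val_two, Matrix.tail_cons]
      · exact my_singleton_connected G p
      · exact my_singleton_connected G q
      · exact my_pair_connected G hadj
      · exact my_singleton_connected G z₁
      · exact my_singleton_connected G z₂
      · exact my_singleton_connected G z₃
    · have hqp := hpq.symm
      have hpc := hcp.symm; have hpd := hdp.symm
      have hqc := hcq.symm; have hqd := hdq.symm
      have hpz1 := hz1p.symm; have hpz2 := hz2p.symm; have hpz3 := hz3p.symm
      have hqz1 := hz1q.symm; have hqz2 := hz2q.symm; have hqz3 := hz3q.symm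
      have hcz1 := hc1.symm; have hcz2 := hc2.symm; have hcz3 := hc3.symm
      have hdz1 := hd1.symm; have hdz2 := hd2.symm; have hdz3 := hd3.symm
      have h21 := h12.symm; have h31 := h13.symm; have h32 := h23.symm
      rintro (a | a) (b | b) hab
      · fin_cases a <;> fin_cases b
        · exact absurd rfl hab
        · exact my_dss hpq
        · exact my_dsp hpc hpd
        · exact my_dss hqp
        · exact absurd rfl hab
        · exact my_dsp hqc hqd
        · exact my_dps hcp hdp
        · exact my_dps hcq hdq
        · exact absurd rfl hab
      · fin_cases a <;> fin_cases b
        · exact my_dss hpz1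
        · exact my_dss hpz2
        · exact my_dss hpz3
        · exact my_dss hqz1
        · exact my_dss hqz2
        · exact my_dss hqz3
        · exact my_dps hcz1 hdz1
        · exact my_dps hcz2 hdz2
        · exact my_dps hcz3 hdz3
      · fin_cases a <;> fin_cases b
        · exact my_dss hz1p
        · exact my_dss hz1q
        · exact my_dsp hc1 hd1
        · exact my_dss hz2p
        · exact my_dss hz2q
        · exact my_dsp hc2 hd2
        · exact my_dss hz3p
        · exact my_dss hz3q
        · exact my_dsp hc3 hd3
      · fin_cases a <;> fin_cases b
        · exact absurd rfl hab
        · exact my_dss h12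
        · exact my_dss h13
        · exact my_dss h21
        · exact absurd rfl hab
        · exact my_dss h23
        · exact my_dss h31
        · exact my_dss h32
        · exact absurd rfl hab
    · rintro (a | a) (b | b) hab
      · simp at hab
      · fin_cases a <;> fin_cases b <;>
          simp only [Sum.elim_inl, Sum.elim_inr, Matrix.cons_val_zero, Matrix.cons_val_one,
            Matrix.head_cons, Matrix.cons_val_two, Matrix.tail_cons]
        · exact ⟨p, rfl, z₁, rfl, hp1⟩
        · exact ⟨p, rfl, z₂, rfl, hp2⟩
        · exact ⟨p, rfl, z₃, rfl, hp3⟩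
        · exact ⟨q, rfl, z₁, rfl, hq1⟩
        · exact ⟨q, rfl, z₂, rfl, hq2⟩
        · exact ⟨q, rfl, z₃, rfl, hq3⟩
        · obtain ⟨w, hw, hwadj⟩ := hdom z₁; exact ⟨w, hw, z₁, rfl, hwadj.symm⟩
        · obtain ⟨w, hw, hwadj⟩ := hdom z₂; exact ⟨w, hw, z₂, rfl, hwadj.symm⟩
        · obtain ⟨w, hw, hwadj⟩ := hdom z₃; exact ⟨w, hw, z₃, rfl, hwadj.symm⟩
      · fin_cases a <;> fin_cases b <;>
          simp only [Sum.elim_inl, Sum.elim_inr, Matrix.cons_val_zero, Matrix.cons_val_one,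
            Matrix.head_cons, Matrix.cons_val_two, Matrix.tail_cons]
        · exact ⟨z₁, rfl, p, rfl, hp1.symm⟩
        · exact ⟨z₁, rfl, q, rfl, hq1.symm⟩
        · obtain ⟨w, hw, hwadj⟩ := hdom z₁; exact ⟨z₁, rfl, w, hw, hwadj⟩
        · exact ⟨z₂, rfl, p, rfl, hp2.symm⟩
        · exact ⟨z₂, rfl, q, rfl, hq2.symm⟩
        · obtain ⟨w, hw, hwadj⟩ := hdom z₂; exact ⟨z₂, rfl, w, hw, hwadj⟩
        · exact ⟨z₃, rfl, p, rfl, hp3.symm⟩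
        · exact ⟨z₃, rfl, q, rfl, hq3.symm⟩
        · obtain ⟨w, hw, hwadj⟩ := hdom z₃; exact ⟨z₃, rfl, w, hw, hwadj⟩
      · simp at hab
  calc (G.neighborSet p ∩ G.neighborSet q).ncard
      ≤ (C ∪ {c, d}).ncard := by
        apply Set.ncard_le_ncard _ (Set.toFinite _)
        intro x hx
        by_cases hxcd : x ∈ ({c, d} : Set V)
        · exact Or.inr hxcd
        · exact Or.inl ⟨hx, hxcd⟩
    _ ≤ C.ncard + ({c, d} : Set V).ncard := Set.ncard_union_le _ _
    _ ≤ 2 + 2 := by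
        have : ({c, d} : Set V).ncard ≤ 2 := by
          apply le_trans (Set.ncard_insert_le _ _); simp
        omega

/-- A planar well-totally-dominated graph with total domination number 2 and
minimum degree at least 3 has at most 16 vertices. -/
theorem stmt_11 {V : Type*} [Fintype V] (G : SimpleGraph V)
    (hplanar : IsPlanar G)
    (hdeg : ∀ v : V, 3 ≤ (G.neighborSet v).ncard)
    (hex : ∃ S : Set V, IsMinTDS G S)
    (hWTD2 : ∀ S : Set V, IsMinTDS G S → S.ncard = 2) :
    Fintype.card V ≤ 16 := by
  -- Step 1: from any pair of vertices, a dominating edge avoiding them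
  have hdompair : ∀ p q : V, ∃ c d : V, c ≠ d ∧ G.Adj c d ∧ IsTDS G {c, d} ∧
      c ∉ ({p, q} : Set V) ∧ d ∉ ({p, q} : Set V) := by
    intro p q
    have hTDS : IsTDS G (Set.univ \ {p, q}) := by
      intro x
      have hsub : ¬ (G.neighborSet x ⊆ {p, q}) := by
        intro h
        have h1 := Set.ncard_le_ncard h (Set.toFinite _)
        have h2 : ({p, q} : Set V).ncard ≤ 2 := by
          apply le_trans (Set.ncard_insert_le _ _)
          simp
        have := hdeg x
        omega
      rw [Set.not_subset] at hsub
      obtain ⟨w, hw1, hw2⟩ := hsub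
      exact ⟨w, ⟨Set.mem_univ w, hw2⟩, hw1⟩
    obtain ⟨T, hTsub, hTmin⟩ := exists_minTDS_subset G (Fintype.card V) _ (by
      apply Set.ncard_le_ncard (Set.subset_univ _) (Set.toFinite _) |>.trans
      simp [Set.ncard_univ]) hTDS
    have h2 := hWTD2 T hTmin
    rw [Set.ncard_eq_two] at h2
    obtain ⟨c, d, hcd, rfl⟩ := h2
    have hadj : G.Adj c d := by
      obtain ⟨w, hw, hadj⟩ := hTmin.1 c
      rcases hw with rfl | rfl
      · exact absurd hadj (G.irrefl)
      · exact hadj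
    exact ⟨c, d, hcd, hadj, hTmin.1, (hTsub (Or.inl rfl)).2, (hTsub (Or.inr rfl)).2⟩
  -- Step 2: a dominating edge {u, v}
  obtain ⟨S, hS⟩ := hex
  have h2 := hWTD2 S hS
  rw [Set.ncard_eq_two] at h2
  obtain ⟨u, v, huv, rfl⟩ := h2
  -- Step 3: a dominating edge {a, b} avoiding {u, v}
  obtain ⟨a, b, hab, hadj2, hdom2, hauv, hbuv⟩ := hdompair u v
  have hau : u ≠ a := fun h => hauv (Or.inl h.symm)
  have hav : v ≠ a := fun h => hauv (Or.inr h.symm)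
  have hbu : u ≠ b := fun h => hbuv (Or.inl h.symm)
  have hbv : v ≠ b := fun h => hbuv (Or.inr h.symm)
  -- Step 4: every vertex other than a, b has degree at most 8
  have degbound : ∀ w : V, w ≠ a → w ≠ b → (G.neighborSet w).ncard ≤ 8 := by
    intro w hwa hwb
    have hsub : G.neighborSet w ⊆
        (G.neighborSet w ∩ G.neighborSet a) ∪ (G.neighborSet w ∩ G.neighborSet b) := by
      intro x hx
      obtain ⟨y, hy, hadjxy⟩ := hdom2 x
      rcases hy with rfl | rfl
      · exact Or.inl ⟨hx, hadjxy.symm⟩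
      · exact Or.inr ⟨hx, hadjxy.symm⟩
    calc (G.neighborSet w).ncard
        ≤ ((G.neighborSet w ∩ G.neighborSet a) ∪
            (G.neighborSet w ∩ G.neighborSet b)).ncard :=
          Set.ncard_le_ncard hsub (Set.toFinite _)
      _ ≤ (G.neighborSet w ∩ G.neighborSet a).ncard +
            (G.neighborSet w ∩ G.neighborSet b).ncard := Set.ncard_union_le _ _
      _ ≤ 4 + 4 := by
          have ha4 := common_nbrs_le_four G hplanar.2 hdompair hwa
          have hb4 := common_nbrs_le_four G hplanar.2 hdompair hwb
          omega
  -- Step 5: V = N(u) ∪ N(v)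
  have hVsub : (Set.univ : Set V) ⊆ G.neighborSet u ∪ G.neighborSet v := by
    intro x _
    obtain ⟨y, hy, hadjxy⟩ := hS.1 x
    rcases hy with rfl | rfl
    · exact Or.inl hadjxy.symm
    · exact Or.inr hadjxy.symm
  have hcard := Set.ncard_le_ncard hVsub (Set.toFinite _)
  rw [Set.ncard_univ] at hcard
  have hunion := Set.ncard_union_le (G.neighborSet u) (G.neighborSet v)
  have hu8 := degbound u hau hbu
  have hv8 := degbound v hav hbv
  have hNat : Nat.card V = Fintype.card V := Nat.card_eq_fintype_card
  omega
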